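/- arXiv:2001.01636 — 4 statements merged into one kernel-verified Lean document; each statement's English description precedes it below -/
import Mathlib

section
/- For all u, v ∈ L²(0,1) (real-valued), ⟨u, 𝔰𝔞𝔱(u + v) − 𝔰𝔞𝔱(u)⟩_{L²(0,1)} ≤ ‖v‖_{L²(0,1)}, i.e. ∫₀¹ u(ξ)·(sat_ℝ(u(ξ)+v(ξ)) − sat_ℝ(u(ξ))) dξ ≤ ‖v‖_{L²(0,1)}. In particular 𝔰𝔞𝔱 satisfies property (v) of a saturation function with constant C₀ = 1. -/
open MeasureTheory

/-- The scalar saturation function `sat_ℝ(z) = max (-1) (min 1 z)`. -/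
noncomputable def satR (z : ℝ) : ℝ := max (-1) (min 1 z)

lemma satR_lip (x y : ℝ) : |satR x - satR y| ≤ |x - y| := by
  unfold satR
  rcases abs_cases (x - y) with ⟨h,_⟩|⟨h,_⟩ <;> rw [abs_le] <;>
  constructor <;> simp [max_def, min_def] <;> split_ifs <;> linarith

lemma key (a b : ℝ) : a * (satR (a+b) - satR a) ≤ |b| := by
  have h1 := satR_lip (a+b) a
  have h2 : |a + b - a| = |b| := by ring_nf
  rw [h2] at h1
  rcases le_total a 1 with ha|ha
  · rcases le_total (-1) a with ha'|ha'
    · have hsa : satR a = a := by simp [satR, max_def, min_def]; split_ifs <;> linarith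
      calc a * (satR (a+b) - satR a) ≤ |a| * |satR (a+b) - satR a| := by
            rw [← abs_mul]; exact le_abs_self _
        _ ≤ 1 * |b| := by
            apply mul_le_mul _ h1 (abs_nonneg _) (by norm_num)
            rw [abs_le]; exact ⟨ha', ha⟩
        _ = |b| := one_mul _
    · have hsa : satR a = -1 := by
        rw [satR, min_eq_right (by linarith : a ≤ 1), max_eq_left ha']
      have : satR (a+b) ≥ -1 := le_max_left _ _
      nlinarith [abs_nonneg b]
  · have hsa : satR a = 1 := by
      rw [satR, min_eq_left ha, max_eq_right (by norm_num)]
    have : satR (a+b) ≤ 1 :=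
      max_le (by norm_num) (min_le_left _ _)
    nlinarith [abs_nonneg b]

lemma satR_cont : Continuous satR :=
  continuous_const.max (continuous_const.min continuous_id)

/-- For all `u, v ∈ L²(0,1)`, `⟨u, 𝔰𝔞𝔱(u+v) − 𝔰𝔞𝔱(u)⟩_{L²(0,1)} ≤ ‖v‖_{L²(0,1)}`. -/
theorem stmt_1 (u v : ℝ → ℝ)
    (hu : MemLp u 2 (volume.restrict (Set.Ioo (0:ℝ) 1)))
    (hv : MemLp v 2 (volume.restrict (Set.Ioo (0:ℝ) 1))) :
    ∫ ξ in Set.Ioo (0:ℝ) 1, u ξ * (satR (u ξ + v ξ) - satR (u ξ)) ≤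
      (eLpNorm v 2 (volume.restrict (Set.Ioo (0:ℝ) 1))).toReal := by
  set μ := volume.restrict (Set.Ioo (0:ℝ) 1) with hμ
  haveI : IsFiniteMeasure μ := by
    constructor
    rw [hμ, Measure.restrict_apply MeasurableSet.univ, Set.univ_inter, Real.volume_Ioo]
    norm_num
  set g : ℝ → ℝ := fun ξ => satR (u ξ + v ξ) - satR (u ξ) with hg
  have hgm : AEStronglyMeasurable g μ :=
    (satR_cont.comp_aestronglyMeasurable (hu.1.add hv.1)).sub
      (satR_cont.comp_aestronglyMeasurable hu.1)
  have hgle : ∀ ξ, ‖g ξ‖ ≤ ‖v ξ‖ := fun ξ => by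
    have := satR_lip (u ξ + v ξ) (u ξ)
    simpa [hg, Real.norm_eq_abs] using this.trans_eq (by ring_nf)
  have hgL2 : MemLp g 2 μ := hv.of_le hgm (Filter.Eventually.of_forall hgle)
  have hvi : Integrable v μ := hv.integrable (by norm_num)
  have hui : Integrable u μ := hu.integrable (by norm_num)
  have hgbd : ∀ ξ, ‖g ξ‖ ≤ 2 := fun ξ => by
    have h1 : -1 ≤ satR (u ξ + v ξ) := le_max_left _ _
    have h2 : satR (u ξ + v ξ) ≤ 1 := max_le (by norm_num) (min_le_left _ _)
    have h3 : -1 ≤ satR (u ξ) := le_max_left _ _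
    have h4 : satR (u ξ) ≤ 1 := max_le (by norm_num) (min_le_left _ _)
    rw [hg, Real.norm_eq_abs, abs_le]; constructor <;> simp <;> linarith
  have hfi : Integrable (fun ξ => u ξ * g ξ) μ := by
    have := hui.bdd_mul hgm (Filter.Eventually.of_forall hgbd)
    simpa [mul_comm] using this
  have h1 : ∫ ξ, u ξ * g ξ ∂μ ≤ ∫ ξ, |v ξ| ∂μ :=
    integral_mono hfi hvi.abs (fun ξ => key (u ξ) (v ξ))
  have h2 : ∫ ξ, |v ξ| ∂μ = (eLpNorm v 1 μ).toReal := by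
    rw [eLpNorm_one_eq_lintegral_enorm]
    rw [integral_eq_lintegral_of_nonneg_ae (Filter.Eventually.of_forall fun ξ => abs_nonneg _)
      hvi.abs.aestronglyMeasurable]
    congr 1
    apply lintegral_congr
    intro ξ
    exact (Real.enorm_eq_ofReal_abs _).symm
  have h3 : eLpNorm v 1 μ ≤ eLpNorm v 2 μ := by
    have := eLpNorm_le_eLpNorm_mul_rpow_measure_univ (p := 1) (q := 2)
      (by norm_num) hv.1 (μ := μ)
    have hμ1 : μ Set.univ = 1 := by
      rw [hμ, Measure.restrict_apply MeasurableSet.univ, Set.univ_inter, Real.volume_Ioo]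
      norm_num
    simpa [hμ1] using this
  calc ∫ ξ, u ξ * g ξ ∂μ ≤ (eLpNorm v 1 μ).toReal := h1.trans_eq h2
    _ ≤ (eLpNorm v 2 μ).toReal := ENNReal.toReal_mono hv.2.ne h3
end

section
/- For all a, b ∈ ℝ, a · (sat_ℝ(a + b) − sat_ℝ(a)) ≤ |b|. -/
/-- For all `a, b ∈ ℝ`, `a · (sat_ℝ(a+b) − sat_ℝ(a)) ≤ |b|`. -/
theorem stmt_5 (a b : ℝ) : a * (satR (a + b) - satR a) ≤ |b| := by
  unfold satR
  rcases abs_cases b with ⟨h1, h2⟩ | ⟨h1, h2⟩ <;> rw [h1] <;>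
  rcases le_total (a + b) 1 with h3 | h3 <;>
  rcases le_total a 1 with h4 | h4 <;>
  rcases le_total (a + b) (-1) with h5 | h5 <;>
  rcases le_total a (-1) with h6 | h6 <;>
  simp_all [min_eq_left, min_eq_right, max_eq_left, max_eq_right] <;>
  nlinarith
end

section
/- For every fixed t ≥ 0, lim_{n→∞} ∫₀^{ξ_{t,n}} (n^{−1/2} ξ^{−α_n} − t)² dξ = 1. -/
open MeasureTheory

/-- `α_n = (1/2)(1 − 1/n)`. -/
noncomputable def alphaN (n : ℕ) : ℝ := (1 / 2) * (1 - 1 / (n : ℝ))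

/-- `f_n(ξ) = n^{−1/2} ξ^{−α_n}`. -/
noncomputable def fn (n : ℕ) (ξ : ℝ) : ℝ := (n : ℝ) ^ (-(1 : ℝ) / 2) * ξ ^ (-alphaN n)

/-- `ξ_{t,n} = (√n (1+t))^{−1/α_n}`. -/
noncomputable def xiTN (t : ℝ) (n : ℕ) : ℝ :=
  (Real.sqrt n * (1 + t)) ^ (-(1 / alphaN n))

section aux

variable (t : ℝ)

noncomputable def Gaux (t : ℝ) (n : ℕ) : ℝ :=
  xiTN t n ^ ((n : ℝ)⁻¹)
    - 2 * t * ((n : ℝ) ^ (-(1 : ℝ) / 2) * xiTN t n ^ (1 - alphaN n) / (1 - alphaN n))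
    + t ^ 2 * xiTN t n

lemma alphaN_pos {n : ℕ} (hn : 2 ≤ n) : 0 < alphaN n := by
  have h : (2 : ℝ) ≤ n := by exact_mod_cast hn
  have h0 : (0 : ℝ) < n := by linarith
  unfold alphaN
  have : 1 / (n : ℝ) ≤ 1 / 2 := by
    apply div_le_div_of_nonneg_left <;> linarith
  nlinarith

lemma alphaN_lt_half {n : ℕ} (hn : 2 ≤ n) : alphaN n < 1 / 2 := by
  have h : (2 : ℝ) ≤ n := by exact_mod_cast hn
  have h0 : (0 : ℝ) < n := by linarith
  have : 0 < 1 / (n : ℝ) := by positivity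
  unfold alphaN
  nlinarith

lemma one_sub_two_alphaN {n : ℕ} (hn : 2 ≤ n) : 1 - 2 * alphaN n = 1 / (n : ℝ) := by
  have h0 : (0 : ℝ) < n := by
    have : (2 : ℝ) ≤ n := by exact_mod_cast hn
    linarith
  unfold alphaN
  have hne : (n:ℝ) ≠ 0 := ne_of_gt h0
  have : (1:ℝ)/(n:ℝ) * (n:ℝ) = 1 := by field_simp
  nlinarith [this]

lemma base_ge_one (ht : 0 ≤ t) {n : ℕ} (hn : 2 ≤ n) : 1 ≤ Real.sqrt n * (1 + t) := by
  have h1 : (1 : ℝ) ≤ Real.sqrt n := by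
    rw [show (1:ℝ) = Real.sqrt 1 by simp]
    apply Real.sqrt_le_sqrt
    exact_mod_cast Nat.one_le_of_lt hn
  nlinarith [Real.sqrt_nonneg (n : ℝ)]

lemma xiTN_pos (ht : 0 ≤ t) {n : ℕ} (hn : 2 ≤ n) : 0 < xiTN t n := by
  have := base_ge_one t ht hn
  unfold xiTN
  positivity

lemma xiTN_le_one (ht : 0 ≤ t) {n : ℕ} (hn : 2 ≤ n) : xiTN t n ≤ 1 := by
  apply Real.rpow_le_one_of_one_le_of_nonpos (base_ge_one t ht hn)
  have := alphaN_pos hn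
  rw [neg_nonpos]
  positivity

lemma log_xiTN (ht : 0 ≤ t) {n : ℕ} (hn : 2 ≤ n) :
    Real.log (xiTN t n) = -(1 / alphaN n) * Real.log (Real.sqrt n * (1 + t)) := by
  unfold xiTN
  rw [Real.log_rpow]
  have := base_ge_one t ht hn
  linarith

noncomputable def Laux (t : ℝ) (n : ℕ) : ℝ := (1 / 2) * Real.log n + Real.log (1 + t)

lemma log_base (ht : 0 ≤ t) {n : ℕ} (hn : 2 ≤ n) :
    Real.log (Real.sqrt n * (1 + t)) = Laux t n := by
  have h1 : (1:ℝ) ≤ 1 + t := by linarith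
  have h2 : (0:ℝ) < n := by
    have : (2:ℝ) ≤ n := by exact_mod_cast hn
    linarith
  have hs : Real.sqrt (n:ℝ) ≠ 0 := by positivity
  rw [Real.log_mul hs (by linarith), Real.log_sqrt h2.le, Laux]
  ring

lemma tendsto_alphaN : Filter.Tendsto (fun n : ℕ => alphaN n) Filter.atTop (nhds (1/2)) := by
  have h := tendsto_one_div_atTop_nhds_zero_nat (𝕜 := ℝ)
  have : Filter.Tendsto (fun n : ℕ => (1/2 : ℝ) * (1 - 1/(n:ℝ))) Filter.atTop
      (nhds ((1/2) * (1 - 0))) := (Filter.Tendsto.const_sub _ h).const_mul _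
  simpa [alphaN] using this

lemma tendsto_inv_alphaN : Filter.Tendsto (fun n : ℕ => (alphaN n)⁻¹) Filter.atTop (nhds 2) := by
  have := tendsto_alphaN.inv₀ (by norm_num)
  simpa using this

lemma tendsto_Laux (ht : 0 ≤ t) : Filter.Tendsto (Laux t) Filter.atTop Filter.atTop := by
  apply Filter.tendsto_atTop_add_const_right
  apply Filter.Tendsto.const_mul_atTop (by norm_num : (0:ℝ) < 1/2)
  exact Real.tendsto_log_atTop.comp tendsto_natCast_atTop_atTop

lemma tendsto_Laux_div (ht : 0 ≤ t) :
    Filter.Tendsto (fun n : ℕ => Laux t n / n) Filter.atTop (nhds 0) := by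
  have h1 : Filter.Tendsto (fun n : ℕ => Real.log n / n) Filter.atTop (nhds 0) :=
    (Real.isLittleO_log_id_atTop.tendsto_div_nhds_zero).comp tendsto_natCast_atTop_atTop
  have h2 : Filter.Tendsto (fun n : ℕ => Real.log (1+t) / n) Filter.atTop (nhds 0) :=
    tendsto_const_div_atTop_nhds_zero_nat _
  have := ((h1.const_mul (1/2 : ℝ)).add h2)
  have h3 : Filter.Tendsto (fun n : ℕ => (1/2) * (Real.log n / n) + Real.log (1+t) / n)
      Filter.atTop (nhds 0) := by simpa using this
  apply h3.congr
  intro n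
  rw [Laux]
  ring

lemma tendsto_log_xiTN (ht : 0 ≤ t) :
    Filter.Tendsto (fun n : ℕ => Real.log (xiTN t n)) Filter.atTop Filter.atBot := by
  have h : Filter.Tendsto (fun n : ℕ => -(alphaN n)⁻¹ * Laux t n) Filter.atTop Filter.atBot := by
    apply Filter.Tendsto.neg_mul_atTop (C := (-2:ℝ)) (by norm_num)
    · simpa using tendsto_inv_alphaN.neg
    · exact tendsto_Laux t ht
  apply h.congr'
  filter_upwards [Filter.eventually_ge_atTop 2] with n hn
  rw [log_xiTN t ht hn, log_base t ht hn, one_div]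

lemma tendsto_xiTN (ht : 0 ≤ t) :
    Filter.Tendsto (fun n : ℕ => xiTN t n) Filter.atTop (nhds 0) := by
  have h := Real.tendsto_exp_atBot.comp (tendsto_log_xiTN t ht)
  apply h.congr'
  filter_upwards [Filter.eventually_ge_atTop 2] with n hn
  simp only [Function.comp]
  rw [Real.exp_log (xiTN_pos t ht hn)]

lemma tendsto_term1 (ht : 0 ≤ t) :
    Filter.Tendsto (fun n : ℕ => xiTN t n ^ ((n:ℝ)⁻¹)) Filter.atTop (nhds 1) := by
  have hexp : Filter.Tendsto (fun n : ℕ => (-(alphaN n)⁻¹) * (Laux t n / n))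
      Filter.atTop (nhds ((-2) * 0)) := by
    exact Filter.Tendsto.mul (by simpa using tendsto_inv_alphaN.neg) (tendsto_Laux_div t ht)
  have h : Filter.Tendsto (fun n : ℕ => Real.exp ((-(alphaN n)⁻¹) * (Laux t n / n)))
      Filter.atTop (nhds 1) := by
    have := Real.continuous_exp.continuousAt.tendsto.comp (by simpa using hexp)
    simpa [Function.comp_def] using this
  apply h.congr'
  filter_upwards [Filter.eventually_ge_atTop 2] with n hn
  have hb := xiTN_pos t ht hn
  rw [Real.rpow_def_of_pos hb, log_xiTN t ht hn, log_base t ht hn]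
  congr 1
  have hne : (n:ℝ) ≠ 0 := by
    have : (2:ℝ) ≤ n := by exact_mod_cast hn
    linarith
  field_simp

lemma tendsto_term2 (ht : 0 ≤ t) :
    Filter.Tendsto (fun n : ℕ => (n : ℝ) ^ (-(1:ℝ)/2) * xiTN t n ^ (1 - alphaN n))
      Filter.atTop (nhds 0) := by
  have h1 : Filter.Tendsto (fun n : ℕ => Real.log n * (-(1:ℝ)/2)) Filter.atTop Filter.atBot := by
    apply Filter.Tendsto.atTop_mul_const_of_neg (by norm_num : (-(1:ℝ)/2) < 0)
    exact Real.tendsto_log_atTop.comp tendsto_natCast_atTop_atTop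
  have h2 : Filter.Tendsto (fun n : ℕ => Real.log (xiTN t n) * (1 - alphaN n))
      Filter.atTop Filter.atBot := by
    have hc : Filter.Tendsto (fun n : ℕ => (1 - alphaN n)) Filter.atTop (nhds (1/2 : ℝ)) := by
      have h := tendsto_alphaN.const_sub (1:ℝ)
      have he : (1 - 1/2 : ℝ) = 1/2 := by norm_num
      rw [he] at h
      exact h
    have := Filter.Tendsto.pos_mul_atBot (by norm_num : (0:ℝ) < 1/2) hc (tendsto_log_xiTN t ht)
    apply this.congr
    intro n; ring
  have hsum : Filter.Tendsto
      (fun n : ℕ => Real.log n * (-(1:ℝ)/2) + Real.log (xiTN t n) * (1 - alphaN n))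
      Filter.atTop Filter.atBot := Filter.Tendsto.atBot_add_atBot h1 h2
  have h := Real.tendsto_exp_atBot.comp hsum
  apply h.congr'
  filter_upwards [Filter.eventually_ge_atTop 2] with n hn
  have hb := xiTN_pos t ht hn
  have hnpos : (0:ℝ) < n := by
    have : (2:ℝ) ≤ n := by exact_mod_cast hn
    linarith
  simp only [Function.comp]
  rw [Real.exp_add, ← Real.rpow_def_of_pos hnpos, ← Real.rpow_def_of_pos hb]

lemma tendsto_Gaux (ht : 0 ≤ t) : Filter.Tendsto (Gaux t) Filter.atTop (nhds 1) := by
  have h2 : Filter.Tendsto (fun n : ℕ =>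
      2 * t * ((n : ℝ) ^ (-(1:ℝ)/2) * xiTN t n ^ (1 - alphaN n) / (1 - alphaN n)))
      Filter.atTop (nhds 0) := by
    have hc : Filter.Tendsto (fun n : ℕ => (1 - alphaN n)) Filter.atTop (nhds (1/2 : ℝ)) := by
      have h := tendsto_alphaN.const_sub (1:ℝ)
      have he : (1 - 1/2 : ℝ) = 1/2 := by norm_num
      rw [he] at h
      exact h
    have := ((tendsto_term2 t ht).div hc (by norm_num)).const_mul (2*t)
    simpa using this
  have h3 : Filter.Tendsto (fun n : ℕ => t^2 * xiTN t n) Filter.atTop (nhds 0) := by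
    have := (tendsto_xiTN t ht).const_mul (t^2)
    simpa using this
  have := ((tendsto_term1 t ht).sub h2).add h3
  have e : (1:ℝ) - 0 + 0 = 1 := by norm_num
  rw [e] at this
  exact this

lemma integral_eq (ht : 0 ≤ t) {n : ℕ} (hn : 2 ≤ n) :
    ∫ ξ in Set.Ioo (0:ℝ) (xiTN t n), (fn n ξ - t) ^ 2 = Gaux t n := by
  set α := alphaN n with hα
  set b := xiTN t n with hbdef
  have hb := xiTN_pos t ht hn
  have hα0 := alphaN_pos hn
  have hα1 := alphaN_lt_half hn
  have hnR : (2:ℝ) ≤ n := by exact_mod_cast hn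
  have hnpos : (0:ℝ) < n := by linarith
  have hne : (n:ℝ) ≠ 0 := ne_of_gt hnpos
  have hpt : Set.EqOn (fun ξ : ℝ => (fn n ξ - t)^2)
      (fun ξ : ℝ => (n:ℝ)⁻¹ * ξ ^ (-(2*α)) - (2*t*(n:ℝ)^(-(1:ℝ)/2)) * ξ^(-α) + t^2)
      (Set.Ioo (0:ℝ) b) := by
    intro ξ hξ
    have hξ0 : (0:ℝ) < ξ := hξ.1
    have e1 : ((n:ℝ)^(-(1:ℝ)/2)) * ((n:ℝ)^(-(1:ℝ)/2)) = (n:ℝ)⁻¹ := by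
      rw [← Real.rpow_add hnpos]
      norm_num [Real.rpow_neg_one]
    have e2 : (ξ^(-α)) * (ξ^(-α)) = ξ^(-(2*α)) := by
      rw [← Real.rpow_add hξ0]
      congr 1
      ring
    simp only
    have h : (fn n ξ - t)^2 = fn n ξ * fn n ξ - 2*t*fn n ξ + t^2 := by ring
    rw [h, fn]
    rw [show ((n:ℝ)^(-(1:ℝ)/2) * ξ^(-α)) * ((n:ℝ)^(-(1:ℝ)/2) * ξ^(-α))
        = (((n:ℝ)^(-(1:ℝ)/2)) * ((n:ℝ)^(-(1:ℝ)/2))) * ((ξ^(-α)) * (ξ^(-α))) by ring, e1, e2]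
    ring
  rw [MeasureTheory.setIntegral_congr_fun measurableSet_Ioo hpt]
  rw [← MeasureTheory.integral_Ioc_eq_integral_Ioo,
    ← intervalIntegral.integral_of_le hb.le]
  have int1 : IntervalIntegrable (fun ξ:ℝ => ξ^(-(2*α))) volume 0 b :=
    intervalIntegral.intervalIntegrable_rpow' (by linarith)
  have int2 : IntervalIntegrable (fun ξ:ℝ => ξ^(-α)) volume 0 b :=
    intervalIntegral.intervalIntegrable_rpow' (by linarith)
  rw [intervalIntegral.integral_add (((int1.const_mul _).sub (int2.const_mul _)))
    intervalIntegrable_const]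
  rw [intervalIntegral.integral_sub (int1.const_mul _) (int2.const_mul _)]
  rw [intervalIntegral.integral_const_mul, intervalIntegral.integral_const_mul,
    intervalIntegral.integral_const]
  rw [integral_rpow (Or.inl (by linarith : (-1:ℝ) < -(2*α))),
    integral_rpow (Or.inl (by linarith : (-1:ℝ) < -α))]
  have h12 : -(2*α) + 1 = (n:ℝ)⁻¹ := by
    have := one_sub_two_alphaN hn
    rw [one_div] at this
    linarith
  have h13 : -α + 1 = 1 - α := by ring
  rw [h12, h13]
  rw [Real.zero_rpow (by positivity : ((n:ℝ)⁻¹) ≠ 0),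
    Real.zero_rpow (by intro h; rw [sub_eq_zero] at h; linarith : (1 - α) ≠ 0)]
  rw [Gaux, smul_eq_mul]
  have hinv : ((n:ℝ)⁻¹) ≠ 0 := by positivity
  have h1a : (1 - α) ≠ 0 := by intro h; rw [sub_eq_zero] at h; linarith
  simp only [← hα, ← hbdef]
  field_simp
  ring

end aux

/-- For fixed `t ≥ 0`, `∫₀^{ξ_{t,n}} (n^{−1/2} ξ^{−α_n} − t)² dξ → 1` as `n → ∞`. -/
theorem stmt_13 (t : ℝ) (ht : 0 ≤ t) :
    Filter.Tendsto (fun n : ℕ => ∫ ξ in Set.Ioo (0:ℝ) (xiTN t n), (fn n ξ - t) ^ 2)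
      Filter.atTop (nhds 1) := by
  apply (tendsto_Gaux t ht).congr'
  filter_upwards [Filter.eventually_ge_atTop 2] with n hn
  exact (integral_eq t ht hn).symm
end

section
/- For n ≥ 2 and t ≥ 0, define x_n(t) ∈ L²(0,1) by x_n(t)(ξ) := φ_{f_n(ξ)}(t) (this lies in L²(0,1) since |φ_a(t)| ≤ |a| and f_n ∈ L²(0,1)); thus x_n is the solution of ẋ(t,ξ) = −sat_ℝ(x(t,ξ)) with x(0,·) = f_n. Then ‖x_n(0)‖_{L²(0,1)} = 1 and for every fixed t ≥ 0, liminf_{n→∞} ‖x_n(t)‖²_{L²(0,1)} ≥ 1. -/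
open MeasureTheory Filter Topology

/-- The explicit solution `φ_a` of the scalar ODE `ẏ = −sat_ℝ(y)`, `y(0) = a`. -/
noncomputable def phi (a t : ℝ) : ℝ :=
  if 1 + t ≤ a then a - t
  else if -1 < a ∧ a < 1 then Real.exp (-t) * a
  else if a ≤ -1 - t then a + t
  else if 1 ≤ a then Real.exp (a - 1 - t)
  else -Real.exp (1 - t - a)

lemma phi_zero (a : ℝ) : phi a 0 = a := by
  unfold phi
  split_ifs with h1 h2 h3 h4
  · ring
  · simp
  · ring
  · exfalso; exact h1 (by linarith)
  · exfalso
    push_neg at h1 h3 h4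
    exact h2 ⟨by linarith, by linarith⟩

lemma phi_of_ge {a t : ℝ} (h : 1 + t ≤ a) : phi a t = a - t := if_pos h

lemma abs_phi_le (a t : ℝ) (ht : 0 ≤ t) : |phi a t| ≤ |a| + Real.exp 2 := by
  have he : (0:ℝ) < Real.exp 2 := Real.exp_pos 2
  have ha := abs_nonneg a
  unfold phi
  split_ifs with h1 h2 h3 h4
  · rw [abs_of_nonneg (by linarith)]
    have : a - t ≤ |a| := by cases abs_cases a <;> linarith
    linarith
  · rw [abs_mul, abs_of_pos (Real.exp_pos _)]
    have h5 : Real.exp (-t) ≤ 1 := Real.exp_le_one_iff.mpr (by linarith)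
    nlinarith
  · rw [abs_of_nonpos (by linarith)]
    have : -(a + t) ≤ |a| := by cases abs_cases a <;> linarith
    linarith
  · push_neg at h1
    rw [abs_of_pos (Real.exp_pos _)]
    have : Real.exp (a - 1 - t) ≤ Real.exp 2 := Real.exp_le_exp.mpr (by linarith)
    linarith
  · push_neg at h1 h3 h4
    rw [abs_neg, abs_of_pos (Real.exp_pos _)]
    have : Real.exp (1 - t - a) ≤ Real.exp 2 := Real.exp_le_exp.mpr (by linarith)
    linarith

lemma measurable_phi (t : ℝ) : Measurable fun a => phi a t := by
  unfold phi
  refine Measurable.ite (measurableSet_le measurable_const measurable_id) (measurable_id.sub measurable_const) ?_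
  refine Measurable.ite ?_ (measurable_const.mul measurable_id) ?_
  · exact (measurableSet_lt measurable_const measurable_id).inter (measurableSet_lt measurable_id measurable_const)
  refine Measurable.ite (measurableSet_le measurable_id measurable_const) (measurable_id.add measurable_const) ?_
  refine Measurable.ite (measurableSet_le measurable_const measurable_id) ?_ ?_
  · exact Real.measurable_exp.comp ((measurable_id.sub measurable_const).sub measurable_const)
  · exact (Real.measurable_exp.comp (measurable_const.sub measurable_id)).neg

lemma measurable_fn (n : ℕ) : Measurable (fn n) :=
  measurable_const.mul (measurable_id.pow measurable_const)

lemma integrableOn_rpow_Ioo {r c : ℝ} (hr : -1 < r) (hc : 0 < c) :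
    IntegrableOn (fun ξ : ℝ => ξ ^ r) (Set.Ioo 0 c) := by
  have h := intervalIntegral.intervalIntegrable_rpow' (a := 0) (b := c) hr
  rwa [intervalIntegrable_iff_integrableOn_Ioo_of_le hc.le] at h

lemma integral_rpow_Ioo {r c : ℝ} (hr : -1 < r) (hc : 0 < c) :
    ∫ ξ in Set.Ioo 0 c, ξ ^ r = c ^ (r + 1) / (r + 1) := by
  rw [← integral_Ioc_eq_integral_Ioo, ← intervalIntegral.integral_of_le hc.le,
    integral_rpow (Or.inl hr), Real.zero_rpow (by linarith), sub_zero]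

lemma alphaN_le (n : ℕ) : alphaN n ≤ 1 / 2 := by
  unfold alphaN
  have : 0 ≤ 1 / (n:ℝ) := by positivity
  linarith

lemma le_alphaN {n : ℕ} (hn : 2 ≤ n) : 1 / 4 ≤ alphaN n := by
  unfold alphaN
  have h2 : (2:ℝ) ≤ n := by exact_mod_cast hn
  have : 1 / (n:ℝ) ≤ 1 / 2 := by
    apply div_le_div_of_nonneg_left <;> linarith
  linarith

lemma fn_sq {n : ℕ} (hn : 2 ≤ n) {ξ : ℝ} (hξ : 0 < ξ) :
    (fn n ξ) ^ 2 = (n:ℝ)⁻¹ * ξ ^ (1 / (n:ℝ) - 1) := by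
  have hn0 : (0:ℝ) < n := by positivity
  unfold fn
  rw [mul_pow, sq, sq, ← Real.rpow_add hn0, ← Real.rpow_add hξ]
  congr 1
  · rw [show -(1:ℝ)/2 + -(1:ℝ)/2 = -1 by ring, Real.rpow_neg_one]
  · congr 1
    unfold alphaN; ring

lemma integrableOn_fn_sq {n : ℕ} (hn : 2 ≤ n) {c : ℝ} (hc : 0 < c) :
    IntegrableOn (fun ξ => (fn n ξ) ^ 2) (Set.Ioo 0 c) := by
  have hn0 : (0:ℝ) < n := by positivity
  have hr : (-1:ℝ) < 1 / (n:ℝ) - 1 := by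
    have : 0 < 1 / (n:ℝ) := by positivity
    linarith
  have h : IntegrableOn (fun ξ : ℝ => (n:ℝ)⁻¹ * ξ ^ (1 / (n:ℝ) - 1)) (Set.Ioo 0 c) :=
    (integrableOn_rpow_Ioo hr hc).const_mul _
  exact h.congr_fun (fun ξ hξ => (fn_sq hn hξ.1).symm) measurableSet_Ioo

lemma integral_fn_sq {n : ℕ} (hn : 2 ≤ n) {c : ℝ} (hc : 0 < c) :
    ∫ ξ in Set.Ioo (0:ℝ) c, (fn n ξ) ^ 2 = c ^ (1 / (n:ℝ)) := by
  have hn0 : (0:ℝ) < n := by positivity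
  have hr : (-1:ℝ) < 1 / (n:ℝ) - 1 := by
    have : 0 < 1 / (n:ℝ) := by positivity
    linarith
  rw [setIntegral_congr_fun measurableSet_Ioo (fun ξ hξ => fn_sq hn hξ.1),
    integral_const_mul, integral_rpow_Ioo hr hc]
  rw [sub_add_cancel]
  field_simp

lemma integrableOn_fn {n : ℕ} (hn : 2 ≤ n) {c : ℝ} (hc : 0 < c) :
    IntegrableOn (fn n) (Set.Ioo 0 c) := by
  have hr : (-1:ℝ) < -alphaN n := by
    have := alphaN_le n; linarith
  exact (integrableOn_rpow_Ioo hr hc).const_mul _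

lemma integral_fn {n : ℕ} (hn : 2 ≤ n) {c : ℝ} (hc : 0 < c) :
    ∫ ξ in Set.Ioo (0:ℝ) c, fn n ξ
      = (n:ℝ) ^ (-(1:ℝ)/2) * (c ^ (1 - alphaN n) / (1 - alphaN n)) := by
  have hr : (-1:ℝ) < -alphaN n := by
    have := alphaN_le n; linarith
  unfold fn
  rw [integral_const_mul, integral_rpow_Ioo hr hc]
  ring_nf

lemma memLp_main {n : ℕ} (hn : 2 ≤ n) {t : ℝ} (ht : 0 ≤ t) :
    MemLp (fun ξ => phi (fn n ξ) t) 2 (volume.restrict (Set.Ioo (0:ℝ) 1)) := by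
  have hmeas : AEStronglyMeasurable (fun ξ => phi (fn n ξ) t)
      (volume.restrict (Set.Ioo (0:ℝ) 1)) :=
    ((measurable_phi t).comp (measurable_fn n)).aestronglyMeasurable
  have hfn : MemLp (fn n) 2 (volume.restrict (Set.Ioo (0:ℝ) 1)) := by
    rw [memLp_two_iff_integrable_sq (measurable_fn n).aestronglyMeasurable]
    exact integrableOn_fn_sq hn one_pos
  have hg : MemLp (fun ξ => |fn n ξ| + Real.exp 2) 2 (volume.restrict (Set.Ioo (0:ℝ) 1)) :=
    hfn.abs.add (memLp_const _)
  refine hg.of_le hmeas ?_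
  filter_upwards with ξ
  rw [Real.norm_eq_abs, Real.norm_eq_abs]
  refine (abs_phi_le _ _ ht).trans (le_abs_self _)

lemma integral_sq_zero {n : ℕ} (hn : 2 ≤ n) :
    ∫ ξ in Set.Ioo (0:ℝ) 1, (phi (fn n ξ) 0) ^ 2 = 1 := by
  simp only [phi_zero]
  rw [integral_fn_sq hn one_pos, Real.one_rpow]

lemma fn_threshold {t : ℝ} (ht : 0 ≤ t) {n : ℕ} (hn : 2 ≤ n) {ξ : ℝ}
    (hξ : ξ ∈ Set.Ioo 0 (((n:ℝ)^(2:ℝ) * (1+t)^(4:ℝ))⁻¹)) : 1 + t ≤ fn n ξ := by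
  set X : ℝ := (n:ℝ)^(2:ℝ) * (1+t)^(4:ℝ) with hXdef
  have hn0 : (0:ℝ) < n := by positivity
  have hn1 : (1:ℝ) ≤ n := by exact_mod_cast Nat.one_le_of_lt hn
  have ht1 : (1:ℝ) ≤ 1 + t := by linarith
  have hX0 : 0 < X := by positivity
  have hX1 : 1 ≤ X :=
    one_le_mul_of_one_le_of_one_le (Real.one_le_rpow hn1 (by norm_num))
      (Real.one_le_rpow ht1 (by norm_num))
  obtain ⟨hξ0, hξc⟩ := hξ
  have hα1 : 1/4 ≤ alphaN n := le_alphaN hn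
  have hα2 : alphaN n ≤ 1/2 := alphaN_le n
  have step1 : (X⁻¹) ^ (-alphaN n) ≤ ξ ^ (-alphaN n) :=
    Real.rpow_le_rpow_of_nonpos hξ0 hξc.le (by linarith)
  have step2 : (X⁻¹) ^ (-alphaN n) = X ^ (alphaN n) := by
    rw [← Real.rpow_neg_one X, ← Real.rpow_mul hX0.le]
    norm_num
  have step3 : X ^ ((1:ℝ)/4) ≤ X ^ alphaN n :=
    Real.rpow_le_rpow_of_exponent_le hX1 hα1
  have step4 : X ^ ((1:ℝ)/4) = (n:ℝ)^((1:ℝ)/2) * (1+t) := by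
    rw [hXdef, Real.mul_rpow (by positivity) (by positivity),
      ← Real.rpow_mul hn0.le, ← Real.rpow_mul (by linarith : (0:ℝ) ≤ 1+t)]
    norm_num
  have key : (n:ℝ)^((1:ℝ)/2) * (1+t) ≤ ξ ^ (-alphaN n) := by
    rw [← step4]; calc X ^ ((1:ℝ)/4) ≤ X ^ alphaN n := step3
      _ = (X⁻¹) ^ (-alphaN n) := step2.symm
      _ ≤ ξ ^ (-alphaN n) := step1
  have hcancel : (n:ℝ) ^ (-(1:ℝ)/2) * ((n:ℝ)^((1:ℝ)/2) * (1+t)) = 1 + t := by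
    rw [← mul_assoc, ← Real.rpow_add hn0]
    norm_num
  calc 1 + t = (n:ℝ) ^ (-(1:ℝ)/2) * ((n:ℝ)^((1:ℝ)/2) * (1+t)) := hcancel.symm
    _ ≤ (n:ℝ) ^ (-(1:ℝ)/2) * ξ ^ (-alphaN n) :=
        mul_le_mul_of_nonneg_left key (Real.rpow_nonneg hn0.le _)
    _ = fn n ξ := rfl

lemma key_bound {t : ℝ} (ht : 0 ≤ t) {n : ℕ} (hn : 2 ≤ n) :
    ((((n:ℝ)^(2:ℝ) * (1+t)^(4:ℝ))⁻¹) ^ (1/(n:ℝ)))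
      - 2*t*((n:ℝ)^(-(1:ℝ)/2) *
        ((((n:ℝ)^(2:ℝ) * (1+t)^(4:ℝ))⁻¹) ^ (1 - alphaN n) / (1 - alphaN n)))
    ≤ ∫ ξ in Set.Ioo (0:ℝ) 1, (phi (fn n ξ) t) ^ 2 := by
  set X : ℝ := (n:ℝ)^(2:ℝ) * (1+t)^(4:ℝ) with hXdef
  have hn0 : (0:ℝ) < n := by positivity
  have hn1 : (1:ℝ) ≤ n := by exact_mod_cast Nat.one_le_of_lt hn
  have ht1 : (1:ℝ) ≤ 1 + t := by linarith
  have hX1 : 1 ≤ X :=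
    one_le_mul_of_one_le_of_one_le (Real.one_le_rpow hn1 (by norm_num))
      (Real.one_le_rpow ht1 (by norm_num))
  have hc0 : 0 < X⁻¹ := by positivity
  have hc1 : X⁻¹ ≤ 1 := inv_le_one_of_one_le₀ hX1
  have hIphi : IntegrableOn (fun ξ => (phi (fn n ξ) t) ^ 2) (Set.Ioo 0 1) :=
    (memLp_main hn ht).integrable_sq
  have h1 : ∫ ξ in Set.Ioo (0:ℝ) X⁻¹, (phi (fn n ξ) t) ^ 2
      ≤ ∫ ξ in Set.Ioo (0:ℝ) 1, (phi (fn n ξ) t) ^ 2 :=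
    setIntegral_mono_set hIphi (ae_of_all _ fun ξ => sq_nonneg _)
      (HasSubset.Subset.eventuallyLE (Set.Ioo_subset_Ioo_right hc1))
  have h2 : ∫ ξ in Set.Ioo (0:ℝ) X⁻¹, (phi (fn n ξ) t) ^ 2
      = ∫ ξ in Set.Ioo (0:ℝ) X⁻¹, (fn n ξ - t) ^ 2 :=
    setIntegral_congr_fun measurableSet_Ioo
      (fun ξ hξ => by rw [phi_of_ge (fn_threshold ht hn hξ)])
  have hint1 : IntegrableOn (fun ξ => (fn n ξ) ^ 2) (Set.Ioo 0 X⁻¹) :=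
    integrableOn_fn_sq hn hc0
  have hint1' : IntegrableOn (fun ξ => 2*t*(fn n ξ)) (Set.Ioo 0 X⁻¹) :=
    (integrableOn_fn hn hc0).const_mul _
  have hint2 : IntegrableOn (fun ξ => (fn n ξ) ^ 2 - 2*t*(fn n ξ)) (Set.Ioo 0 X⁻¹) :=
    hint1.sub hint1'
  have hint3 : IntegrableOn (fun ξ => (fn n ξ - t) ^ 2) (Set.Ioo 0 X⁻¹) := by
    have heq : (fun ξ => (fn n ξ - t) ^ 2)
        = fun ξ => ((fn n ξ) ^ 2 - 2*t*(fn n ξ)) + t^2 := by funext ξ; ring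
    rw [heq]
    exact hint2.add (integrableOn_const measure_Ioo_lt_top.ne)
  have h3 : ∫ ξ in Set.Ioo (0:ℝ) X⁻¹, ((fn n ξ) ^ 2 - 2*t*(fn n ξ))
      ≤ ∫ ξ in Set.Ioo (0:ℝ) X⁻¹, (fn n ξ - t) ^ 2 :=
    integral_mono hint2 hint3 (fun ξ => by nlinarith [sq_nonneg t])
  have h4 : ∫ ξ in Set.Ioo (0:ℝ) X⁻¹, ((fn n ξ) ^ 2 - 2*t*(fn n ξ))
      = (X⁻¹) ^ (1/(n:ℝ))
        - 2*t*((n:ℝ)^(-(1:ℝ)/2) * ((X⁻¹) ^ (1 - alphaN n) / (1 - alphaN n))) := by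
    rw [integral_sub hint1 hint1', integral_const_mul, integral_fn_sq hn hc0,
      integral_fn hn hc0]
  calc ((X⁻¹) ^ (1/(n:ℝ)))
      - 2*t*((n:ℝ)^(-(1:ℝ)/2) * ((X⁻¹) ^ (1 - alphaN n) / (1 - alphaN n)))
      = ∫ ξ in Set.Ioo (0:ℝ) X⁻¹, ((fn n ξ) ^ 2 - 2*t*(fn n ξ)) := h4.symm
    _ ≤ ∫ ξ in Set.Ioo (0:ℝ) X⁻¹, (fn n ξ - t) ^ 2 := h3
    _ = ∫ ξ in Set.Ioo (0:ℝ) X⁻¹, (phi (fn n ξ) t) ^ 2 := h2.symm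
    _ ≤ ∫ ξ in Set.Ioo (0:ℝ) 1, (phi (fn n ξ) t) ^ 2 := h1

lemma tendsto_A {t : ℝ} (ht : 0 ≤ t) :
    Tendsto (fun n : ℕ => (((n:ℝ)^(2:ℝ) * (1+t)^(4:ℝ))⁻¹) ^ (1/(n:ℝ))) atTop (𝓝 1) := by
  have hlog : Tendsto (fun n : ℕ => Real.log n / n) atTop (𝓝 0) :=
    (Real.isLittleO_log_id_atTop.tendsto_div_nhds_zero).comp tendsto_natCast_atTop_atTop
  have hconst : Tendsto (fun n : ℕ => Real.log (1+t) / n) atTop (𝓝 0) :=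
    tendsto_const_div_atTop_nhds_zero_nat _
  have hg : Tendsto
      (fun n : ℕ => (-(2 * Real.log n + 4 * Real.log (1+t))) / (n:ℝ)) atTop (𝓝 0) := by
    have := (hlog.const_mul (-2)).add (hconst.const_mul (-4))
    simp only [mul_zero, add_zero, neg_zero, mul_zero] at this
    · refine this.congr fun n => by ring
  have hexp : Tendsto
      (fun n : ℕ => Real.exp ((-(2 * Real.log n + 4 * Real.log (1+t))) / (n:ℝ)))
      atTop (𝓝 1) := by
    have := (Real.continuous_exp.continuousAt (x := (0:ℝ))).tendsto.comp hg
    simpa [Function.comp_def] using this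
  refine hexp.congr' ?_
  filter_upwards [eventually_ge_atTop 1] with n hn
  have hn0 : (0:ℝ) < n := by exact_mod_cast hn
  have ht1 : (0:ℝ) < 1 + t := by linarith
  have hX0 : 0 < (n:ℝ)^(2:ℝ) * (1+t)^(4:ℝ) := by positivity
  rw [Real.rpow_def_of_pos (by positivity)]
  congr 1
  rw [Real.log_inv, Real.log_mul (by positivity) (by positivity),
    Real.log_rpow hn0, Real.log_rpow ht1]
  ring

lemma tendsto_B {t : ℝ} (ht : 0 ≤ t) :
    Tendsto (fun n : ℕ => 2*t*((n:ℝ)^(-(1:ℝ)/2) *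
      ((((n:ℝ)^(2:ℝ) * (1+t)^(4:ℝ))⁻¹) ^ (1 - alphaN n) / (1 - alphaN n)))) atTop (𝓝 0) := by
  have hg : Tendsto (fun n : ℕ => 4*t*(n:ℝ)^(-(1:ℝ)/2)) atTop (𝓝 0) := by
    have h := (tendsto_rpow_neg_atTop (by norm_num : (0:ℝ) < 1/2)).comp
      tendsto_natCast_atTop_atTop
    have h' : Tendsto (fun n : ℕ => (n:ℝ) ^ (-(1:ℝ)/2)) atTop (𝓝 0) := by
      refine h.congr fun n => ?_
      norm_num
    simpa using h'.const_mul (4*t)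
  refine squeeze_zero' ?_ ?_ hg
  · filter_upwards with n
    have hα := alphaN_le n
    have hX : (0:ℝ) ≤ ((n:ℝ)^(2:ℝ) * (1+t)^(4:ℝ))⁻¹ := by positivity
    have h1α : (0:ℝ) < 1 - alphaN n := by linarith
    positivity
  · filter_upwards [eventually_ge_atTop 2] with n hn
    have hn1 : (1:ℝ) ≤ n := by exact_mod_cast Nat.one_le_of_lt hn
    have ht1 : (1:ℝ) ≤ 1 + t := by linarith
    have hα := alphaN_le n
    have hX1 : 1 ≤ (n:ℝ)^(2:ℝ) * (1+t)^(4:ℝ) :=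
      one_le_mul_of_one_le_of_one_le (Real.one_le_rpow hn1 (by norm_num))
        (Real.one_le_rpow ht1 (by norm_num))
    have hc1 : ((n:ℝ)^(2:ℝ) * (1+t)^(4:ℝ))⁻¹ ≤ 1 := inv_le_one_of_one_le₀ hX1
    have hc0 : (0:ℝ) ≤ ((n:ℝ)^(2:ℝ) * (1+t)^(4:ℝ))⁻¹ := by positivity
    have hrle1 : (((n:ℝ)^(2:ℝ) * (1+t)^(4:ℝ))⁻¹) ^ (1 - alphaN n) ≤ 1 :=
      Real.rpow_le_one hc0 hc1 (by linarith)
    have hr0 : (0:ℝ) ≤ (((n:ℝ)^(2:ℝ) * (1+t)^(4:ℝ))⁻¹) ^ (1 - alphaN n) :=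
      Real.rpow_nonneg hc0 _
    have hq : (((n:ℝ)^(2:ℝ) * (1+t)^(4:ℝ))⁻¹) ^ (1 - alphaN n) / (1 - alphaN n) ≤ 2 := by
      have := div_le_div₀ (by norm_num : (0:ℝ) ≤ 1) hrle1 (by norm_num : (0:ℝ) < 1/2)
        (by linarith : (1:ℝ)/2 ≤ 1 - alphaN n)
      exact this.trans_eq (by norm_num)
    have hq0 : (0:ℝ) ≤ (((n:ℝ)^(2:ℝ) * (1+t)^(4:ℝ))⁻¹) ^ (1 - alphaN n) / (1 - alphaN n) :=
      div_nonneg hr0 (by linarith)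
    have hp0 : (0:ℝ) ≤ (n:ℝ) ^ (-(1:ℝ)/2) := Real.rpow_nonneg (by positivity) _
    nlinarith [mul_le_mul_of_nonneg_left hq hp0]

lemma integral_fn_le {n : ℕ} (hn : 2 ≤ n) :
    ∫ ξ in Set.Ioo (0:ℝ) 1, fn n ξ ≤ 2 := by
  have hn1 : (1:ℝ) ≤ n := by exact_mod_cast Nat.one_le_of_lt hn
  have hα := alphaN_le n
  rw [integral_fn hn one_pos, Real.one_rpow]
  have h1 : (n:ℝ) ^ (-(1:ℝ)/2) ≤ 1 :=
    Real.rpow_le_one_of_one_le_of_nonpos hn1 (by norm_num)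
  have h2 : (1:ℝ) / (1 - alphaN n) ≤ 2 := by
    rw [div_le_iff₀ (by linarith)]; linarith
  have h0 : (0:ℝ) ≤ (n:ℝ) ^ (-(1:ℝ)/2) := Real.rpow_nonneg (by positivity) _
  nlinarith

lemma upper_bound {t : ℝ} (ht : 0 ≤ t) {n : ℕ} (hn : 2 ≤ n) :
    ∫ ξ in Set.Ioo (0:ℝ) 1, (phi (fn n ξ) t) ^ 2
      ≤ 1 + 4 * Real.exp 2 + Real.exp 2 ^ 2 := by
  set e2 := Real.exp 2 with he2
  have he0 : 0 < e2 := Real.exp_pos 2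
  have hIphi : IntegrableOn (fun ξ => (phi (fn n ξ) t) ^ 2) (Set.Ioo 0 1) :=
    (memLp_main hn ht).integrable_sq
  have hint : IntegrableOn (fun ξ => (fn n ξ + e2) ^ 2) (Set.Ioo 0 1) := by
    have heq : (fun ξ => (fn n ξ + e2) ^ 2)
        = fun ξ => ((fn n ξ) ^ 2 + (2*e2) * fn n ξ) + e2^2 := by funext ξ; ring
    rw [heq]
    exact ((integrableOn_fn_sq hn one_pos).add
      ((integrableOn_fn hn one_pos).const_mul _)).add
      (integrableOn_const measure_Ioo_lt_top.ne)
  have hmono : ∫ ξ in Set.Ioo (0:ℝ) 1, (phi (fn n ξ) t) ^ 2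
      ≤ ∫ ξ in Set.Ioo (0:ℝ) 1, (fn n ξ + e2) ^ 2 := by
    refine setIntegral_mono_on hIphi hint measurableSet_Ioo fun ξ hξ => ?_
    have habs := abs_phi_le (fn n ξ) t ht
    have hfn0 : 0 ≤ fn n ξ :=
      mul_nonneg (Real.rpow_nonneg (by positivity) _) (Real.rpow_nonneg hξ.1.le _)
    have h1 : |fn n ξ| = fn n ξ := abs_of_nonneg hfn0
    nlinarith [sq_abs (phi (fn n ξ) t), abs_nonneg (phi (fn n ξ) t)]
  refine hmono.trans ?_
  have heq : (fun ξ => (fn n ξ + e2) ^ 2)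
      = fun ξ => ((fn n ξ) ^ 2 + (2*e2) * fn n ξ) + e2^2 := by funext ξ; ring
  have i3 : IntegrableOn (fun ξ => (fn n ξ) ^ 2) (Set.Ioo 0 1) := integrableOn_fn_sq hn one_pos
  have i4 : IntegrableOn (fun ξ => (2*e2) * fn n ξ) (Set.Ioo 0 1) :=
    (integrableOn_fn hn one_pos).const_mul _
  have i1 : IntegrableOn (fun ξ => (fn n ξ) ^ 2 + (2*e2) * fn n ξ) (Set.Ioo 0 1) := i3.add i4
  have i2 : IntegrableOn (fun _ξ : ℝ => e2 ^ 2) (Set.Ioo 0 1) :=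
    integrableOn_const measure_Ioo_lt_top.ne
  rw [heq, integral_add i1 i2, integral_add i3 i4,
    integral_const_mul, integral_fn_sq hn one_pos, Real.one_rpow]
  have hvol : ∫ _ξ in Set.Ioo (0:ℝ) 1, (e2^2 : ℝ) = e2^2 := by
    simp [Real.volume_Ioo]
  rw [hvol]
  have := integral_fn_le hn
  nlinarith

/-- With `x_n(t)(ξ) := φ_{f_n(ξ)}(t)` (the solution of `ẋ = −sat_ℝ(x)`, `x(0,·) = f_n`):
`x_n(t) ∈ L²(0,1)`, `‖x_n(0)‖_{L²} = 1`, and for every fixed `t ≥ 0`,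
`liminf_{n→∞} ‖x_n(t)‖²_{L²} ≥ 1`. -/
theorem stmt_14 :
    (∀ n : ℕ, 2 ≤ n → ∀ t : ℝ, 0 ≤ t →
      MemLp (fun ξ => phi (fn n ξ) t) 2 (volume.restrict (Set.Ioo (0:ℝ) 1))) ∧
    (∀ n : ℕ, 2 ≤ n →
      Real.sqrt (∫ ξ in Set.Ioo (0:ℝ) 1, (phi (fn n ξ) 0) ^ 2) = 1) ∧
    (∀ t : ℝ, 0 ≤ t →
      1 ≤ Filter.liminf
        (fun n : ℕ => ∫ ξ in Set.Ioo (0:ℝ) 1, (phi (fn n ξ) t) ^ 2)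
        Filter.atTop) := by
  refine ⟨fun n hn t ht => memLp_main hn ht,
    fun n hn => by rw [integral_sq_zero hn, Real.sqrt_one], ?_⟩
  intro t ht
  set u : ℕ → ℝ := fun n => ∫ ξ in Set.Ioo (0:ℝ) 1, (phi (fn n ξ) t) ^ 2 with hu
  set v : ℕ → ℝ := fun n => (((n:ℝ)^(2:ℝ) * (1+t)^(4:ℝ))⁻¹) ^ (1/(n:ℝ))
      - 2*t*((n:ℝ)^(-(1:ℝ)/2) *
        ((((n:ℝ)^(2:ℝ) * (1+t)^(4:ℝ))⁻¹) ^ (1 - alphaN n) / (1 - alphaN n))) with hv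
  have hAB : Tendsto v atTop (𝓝 1) := by
    have := (tendsto_A ht).sub (tendsto_B ht)
    rw [sub_zero] at this
    exact this
  have hle : ∀ᶠ n in atTop, v n ≤ u n :=
    eventually_atTop.mpr ⟨2, fun n hn => key_bound ht hn⟩
  have hco : Filter.IsCoboundedUnder (· ≥ ·) atTop u :=
    isCoboundedUnder_ge_of_eventually_le atTop
      (eventually_atTop.mpr ⟨2, fun n hn => upper_bound ht hn⟩)
  have hlim : Filter.liminf v atTop ≤ Filter.liminf u atTop :=
    liminf_le_liminf hle (hAB.isBoundedUnder_ge) hco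
  rwa [hAB.liminf_eq] at hlim
end
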